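/- arXiv:1211.7191 — 2 statements merged into one kernel-verified Lean document; each statement's English description precedes it below -/
import Mathlib

section
/- Let μ, ν be probability measures on E and G : E → ℝ bounded measurable with inf G > 0. Then for any bounded measurable f, Ψ_G(μ)(f) - Ψ_G(ν)(f) = (ν(G)/μ(G))·(μ - ν)( (G/ν(G))·(f - Ψ_G(ν)(f)) ). -/
/-!
Write `a = μ(G)`, `b = ν(G)`. The integrand on the right is `(f G - Ψ_G(ν)(f) G) / b`, so by
linearity its `ρ`-integral is `(ρ(f G) - Ψ_G(ν)(f) ρ(G)) / b`. Subtracting the `ν`-integral, which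
vanishes, and multiplying by `b / a` leaves `μ(f G) / a - Ψ_G(ν)(f) = Ψ_G(μ)(f) - Ψ_G(ν)(f)`.
-/

open MeasureTheory

section

variable {E : Type*} [MeasurableSpace E] {μ : Measure E}

lemma integrable_of_abs_le [IsFiniteMeasure μ] {g : E → ℝ} (hg : Measurable g)
    (hgb : ∃ C, ∀ x, |g x| ≤ C) : Integrable g μ := by
  obtain ⟨C, hC⟩ := hgb
  exact .of_bound hg.aestronglyMeasurable C (.of_forall hC)

lemma integral_pos_of_forall_le [IsProbabilityMeasure μ] {G : E → ℝ} (hG : Integrable G μ)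
    {ε : ℝ} (hε : 0 < ε) (hεG : ∀ x, ε ≤ G x) : 0 < ∫ x, G x ∂μ :=
  hε.trans_le <| by simpa using integral_mono (integrable_const ε) hG hεG

lemma integral_div_mul_sub {G f : E → ℝ} (hG : Integrable G μ)
    (hfG : Integrable (fun x => f x * G x) μ) (b k : ℝ) :
    ∫ x, G x / b * (f x - k) ∂μ = ((∫ x, f x * G x ∂μ) - k * ∫ x, G x ∂μ) / b := by
  have hpoint : (fun x => G x / b * (f x - k)) = fun x => (f x * G x - k * G x) / b := by
    ext x
    ring
  rw [hpoint, integral_div, integral_sub hfG (hG.const_mul k), integral_const_mul]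

end

theorem stmt12 {E : Type*} [MeasurableSpace E] (μ ν : Measure E)
    [IsProbabilityMeasure μ] [IsProbabilityMeasure ν]
    (G f : E → ℝ) (hG : Measurable G) (hGb : ∃ C, ∀ x, |G x| ≤ C)
    (hGpos : ∃ ε > 0, ∀ x, ε ≤ G x)
    (hf : Measurable f) (hfb : ∃ C, ∀ x, |f x| ≤ C) :
    (∫ x, f x * G x ∂μ) / (∫ x, G x ∂μ) - (∫ x, f x * G x ∂ν) / (∫ x, G x ∂ν)
      = ((∫ x, G x ∂ν) / (∫ x, G x ∂μ)) *
        ((∫ x, (G x / (∫ y, G y ∂ν)) *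
            (f x - (∫ y, f y * G y ∂ν) / (∫ y, G y ∂ν)) ∂μ)
          - ∫ x, (G x / (∫ y, G y ∂ν)) *
              (f x - (∫ y, f y * G y ∂ν) / (∫ y, G y ∂ν)) ∂ν) := by
  obtain ⟨ε, hε, hεG⟩ := hGpos
  obtain ⟨Cf, hCf⟩ := hfb
  have hGμ : Integrable G μ := integrable_of_abs_le hG hGb
  have hGν : Integrable G ν := integrable_of_abs_le hG hGb
  have hfGμ : Integrable (fun x => f x * G x) μ :=
    hGμ.bdd_mul hf.aestronglyMeasurable (.of_forall hCf)
  have hfGν : Integrable (fun x => f x * G x) ν :=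
    hGν.bdd_mul hf.aestronglyMeasurable (.of_forall hCf)
  have haμ := integral_pos_of_forall_le hGμ hε hεG
  have hbν := integral_pos_of_forall_le hGν hε hεG
  rw [integral_div_mul_sub hGμ hfGμ, integral_div_mul_sub hGν hfGν]
  field_simp
  ring
end

section
/- Let μ, ν be probability measures on E, G : E → ℝ bounded measurable with inf G > 0, and P a Markov kernel on E. Define Φ(η) := Ψ_G(η)P for η ∈ P(E). Then ‖Φ(μ) - Φ(ν)‖_tv ≤ 2·g·β(P)·‖μ - ν‖_tv, where g := sup_{x,y} G(x)/G(y), β(P) := sup{osc(P(f)) : osc(f) ≤ 1} is the Dobrushin contraction coefficient, and ‖η‖_tv := sup{|η(f)| : osc(f) ≤ 1}. -/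
/-!
Write `Ψ_G(η)(F) = η(F G) / η(G)` and `F = P f`, so that `osc F ≤ β(P)`. With `c = Ψ_G(ν)(F)`,
the function `h = (F - c) G` satisfies `ν(h) = 0` and `Ψ_G(μ)(F) - Ψ_G(ν)(F) = μ(h) / μ(G)`.
Since `c` is a `G`-weighted average of `F`, `|F - c| ≤ osc F`, and `G(x) ≤ g · μ(G)`, hence
`osc h ≤ 2 g β(P) μ(G)`. Finally `|μ(h) - ν(h)| ≤ osc h · ‖μ - ν‖_tv`.
-/

open MeasureTheory ProbabilityTheory

section

variable {E : Type*} [MeasurableSpace E]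

noncomputable def tvDist (μ ν : Measure E) : ℝ :=
  sSup {r : ℝ | ∃ g : E → ℝ, Measurable g ∧ (∀ x y, |g x - g y| ≤ 1) ∧
    r = |(∫ x, g x ∂μ) - ∫ x, g x ∂ν|}

noncomputable def dobrushinCoeff {F : Type*} [MeasurableSpace F] (P : Kernel E F) : ℝ :=
  sSup {r : ℝ | ∃ g : F → ℝ, Measurable g ∧ (∀ x y, |g x - g y| ≤ 1) ∧
    r = ⨆ x, ⨆ y, |(∫ z, g z ∂(P x)) - ∫ z, g z ∂(P y)|}

lemma le_ciSup_ciSup {α β : Type*} {f : α → β → ℝ} {C : ℝ} (hf : ∀ x y, f x y ≤ C)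
    (x : α) (y : β) :
    f x y ≤ ⨆ x, ⨆ y, f x y :=
  have : Nonempty β := ⟨y⟩
  le_ciSup_of_le ⟨C, Set.forall_mem_range.2 fun x => ciSup_le (hf x)⟩ x
    (le_ciSup ⟨C, Set.forall_mem_range.2 (hf x)⟩ y)

lemma integrable_of_abs_sub_le {μ : Measure E} [IsFiniteMeasure μ] {g : E → ℝ} {D : ℝ}
    (hg : Measurable g) (hosc : ∀ x y, |g x - g y| ≤ D) : Integrable g μ := by
  rcases isEmpty_or_nonempty E with hE | ⟨⟨x₀⟩⟩
  · exact .of_isEmpty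
  refine .of_bound hg.aestronglyMeasurable (|g x₀| + D) (ae_of_all _ fun x => ?_)
  have := abs_sub_abs_le_abs_sub (g x) (g x₀)
  linarith [hosc x x₀, Real.norm_eq_abs (g x)]

lemma integral_sub_integral_le_of_sub_le {ρ σ : Measure E} [IsProbabilityMeasure ρ]
    [IsProbabilityMeasure σ] {g : E → ℝ} {D : ℝ} (hρ : Integrable g ρ) (hσ : Integrable g σ)
    (hosc : ∀ x y, g x - g y ≤ D) : (∫ x, g x ∂ρ) - ∫ x, g x ∂σ ≤ D := by
  have hρ_le : ∀ y, ∫ x, g x ∂ρ ≤ g y + D := fun y => by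
    simpa using integral_mono hρ (integrable_const (g y + D)) fun x => by linarith [hosc x y]
  have := integral_mono (integrable_const _) (hσ.add (integrable_const D)) hρ_le
  simp only [Pi.add_apply, integral_add hσ (integrable_const D), integral_const, probReal_univ,
    one_smul] at this
  linarith

lemma abs_integral_sub_integral_le {ρ σ : Measure E} [IsProbabilityMeasure ρ]
    [IsProbabilityMeasure σ] {g : E → ℝ} {D : ℝ} (hg : Measurable g)
    (hosc : ∀ x y, |g x - g y| ≤ D) : |(∫ x, g x ∂ρ) - ∫ x, g x ∂σ| ≤ D := by
  have hρ : Integrable g ρ := integrable_of_abs_sub_le hg hosc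
  have hσ : Integrable g σ := integrable_of_abs_sub_le hg hosc
  rw [abs_sub_le_iff]
  exact ⟨integral_sub_integral_le_of_sub_le hρ hσ fun x y => (abs_sub_le_iff.1 (hosc x y)).1,
    integral_sub_integral_le_of_sub_le hσ hρ fun x y => (abs_sub_le_iff.1 (hosc y x)).2⟩

lemma abs_integral_sub_integral_le_mul_tvDist (μ ν : Measure E) [IsProbabilityMeasure μ]
    [IsProbabilityMeasure ν] {g : E → ℝ} {D : ℝ} (hg : Measurable g) (hD : 0 ≤ D)
    (hosc : ∀ x y, |g x - g y| ≤ D) :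
    |(∫ x, g x ∂μ) - ∫ x, g x ∂ν| ≤ D * tvDist μ ν := by
  obtain rfl | hD := hD.eq_or_lt
  · simpa using abs_integral_sub_integral_le hg hosc
  have hbdd : BddAbove {r : ℝ | ∃ g : E → ℝ, Measurable g ∧ (∀ x y, |g x - g y| ≤ 1) ∧
      r = |(∫ x, g x ∂μ) - ∫ x, g x ∂ν|} := by
    refine ⟨1, ?_⟩
    rintro _ ⟨g, hg, hosc, rfl⟩
    exact abs_integral_sub_integral_le hg hosc
  have hosc' : ∀ x y, |g x / D - g y / D| ≤ 1 := fun x y => by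
    rw [← sub_div, abs_div, abs_of_pos hD, div_le_one hD]
    exact hosc x y
  have := le_csSup hbdd ⟨_, hg.div_const D, hosc', rfl⟩
  rw [integral_div, integral_div, ← sub_div, abs_div, abs_of_pos hD, div_le_iff₀ hD] at this
  rwa [mul_comm]

lemma abs_integral_kernel_sub_le_dobrushinCoeff {F : Type*} [MeasurableSpace F] (P : Kernel E F)
    [IsMarkovKernel P] {f : F → ℝ} (hf : Measurable f) (hosc : ∀ x y, |f x - f y| ≤ 1)
    (x y : E) :
    |(∫ z, f z ∂(P x)) - ∫ z, f z ∂(P y)| ≤ dobrushinCoeff P := by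
  have hbdd : BddAbove {r : ℝ | ∃ g : F → ℝ, Measurable g ∧ (∀ x y, |g x - g y| ≤ 1) ∧
      r = ⨆ x, ⨆ y, |(∫ z, g z ∂(P x)) - ∫ z, g z ∂(P y)|} := by
    refine ⟨1, ?_⟩
    rintro _ ⟨g, hg, hosc, rfl⟩
    exact Real.iSup_le (fun x => Real.iSup_le (fun y => abs_integral_sub_integral_le hg hosc)
      zero_le_one) zero_le_one
  have hbound x y := abs_integral_sub_integral_le (ρ := P x) (σ := P y) hf hosc
  exact (le_ciSup_ciSup hbound x y).trans (le_csSup hbdd ⟨f, hf, hosc, rfl⟩)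

noncomputable def boltzmannGibbs (G : E → ℝ) (η : Measure E) (F : E → ℝ) : ℝ :=
  (∫ x, F x * G x ∂η) / ∫ x, G x ∂η

lemma boltzmannGibbs_sub_eq {η : Measure E} {F G : E → ℝ}
    (hFG : Integrable (fun x => F x * G x) η) (hG : Integrable G η) (hGη : ∫ x, G x ∂η ≠ 0)
    (c : ℝ) :
    boltzmannGibbs G η F - c = (∫ x, (F x - c) * G x ∂η) / ∫ x, G x ∂η := by
  simp_rw [sub_mul]
  rw [boltzmannGibbs, integral_sub hFG (hG.const_mul c), integral_const_mul]
  field_simp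

lemma abs_sub_boltzmannGibbs_le {η : Measure E} {F G : E → ℝ} {D : ℝ}
    (hFG : Integrable (fun y => F y * G y) η) (hG : Integrable G η) (hG0 : ∀ y, 0 ≤ G y)
    (hGη : 0 < ∫ y, G y ∂η) (hosc : ∀ x y, |F x - F y| ≤ D) (x : E) :
    |F x - boltzmannGibbs G η F| ≤ D := by
  rw [abs_sub_le_iff, boltzmannGibbs]
  constructor
  · rw [sub_le_comm, le_div_iff₀ hGη, ← integral_const_mul]
    refine integral_mono (hG.const_mul _) hFG fun y => mul_le_mul_of_nonneg_right ?_ (hG0 y)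
    linarith [(abs_sub_le_iff.1 (hosc x y)).1]
  · rw [sub_le_iff_le_add', div_le_iff₀ hGη, ← integral_const_mul]
    refine integral_mono hFG (hG.const_mul _) fun y => mul_le_mul_of_nonneg_right ?_ (hG0 y)
    linarith [(abs_sub_le_iff.1 (hosc x y)).2]

lemma le_mul_integral_of_le_mul {μ : Measure E} [IsProbabilityMeasure μ] {G : E → ℝ} {a K : ℝ}
    (hG : Integrable G μ) (h : ∀ y, a ≤ K * G y) : a ≤ K * ∫ y, G y ∂μ := by
  rw [← integral_const_mul]
  simpa using integral_mono (integrable_const a) (hG.const_mul K) h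

theorem abs_boltzmannGibbs_sub_boltzmannGibbs_le (μ ν : Measure E) [IsProbabilityMeasure μ]
    [IsProbabilityMeasure ν] {F G : E → ℝ} {β g : ℝ} (hF : Measurable F) (hG : Measurable G)
    (hG0 : ∀ x, 0 < G x) (hratio : ∀ x y, G x ≤ g * G y) (hFosc : ∀ x y, |F x - F y| ≤ β) :
    |boltzmannGibbs G μ F - boltzmannGibbs G ν F| ≤ 2 * g * β * tvDist μ ν := by
  obtain ⟨x₀⟩ : Nonempty E := μ.nonempty_of_neZero
  have hGbdd : ∀ x, ‖G x‖ ≤ g * G x₀ := fun x => by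
    rw [Real.norm_of_nonneg (hG0 x).le]
    exact hratio x x₀
  have hGint (τ : Measure E) [IsFiniteMeasure τ] : Integrable G τ :=
    .of_bound hG.aestronglyMeasurable _ (ae_of_all _ hGbdd)
  have hFGint (τ : Measure E) [IsFiniteMeasure τ] : Integrable (fun x => F x * G x) τ :=
    (integrable_of_abs_sub_le hF hFosc).mul_bdd hG.aestronglyMeasurable (ae_of_all _ hGbdd)
  have hGpos (τ : Measure E) [IsProbabilityMeasure τ] : 0 < ∫ x, G x ∂τ := by
    rw [integral_pos_iff_support_of_nonneg (fun x => (hG0 x).le) (hGint τ),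
      Function.support_eq_univ fun x => (hG0 x).ne']
    simp
  set c := boltzmannGibbs G ν F
  set a := ∫ x, G x ∂μ
  have hh : ∀ x, |(F x - c) * G x| ≤ β * (g * a) := fun x => by
    rw [abs_mul, abs_of_pos (hG0 x)]
    exact mul_le_mul (abs_sub_boltzmannGibbs_le (hFGint ν) (hGint ν) (fun y => (hG0 y).le)
      (hGpos ν) hFosc x) (le_mul_integral_of_le_mul (hGint μ) (hratio x)) (hG0 x).le
      ((abs_nonneg _).trans (hFosc x₀ x₀))
  have hhν : ∫ x, (F x - c) * G x ∂ν = 0 := by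
    have := boltzmannGibbs_sub_eq (hFGint ν) (hGint ν) (hGpos ν).ne' c
    rw [sub_self, eq_comm, div_eq_zero_iff] at this
    exact this.resolve_right (hGpos ν).ne'
  have htv := abs_integral_sub_integral_le_mul_tvDist μ ν
    (g := fun x => (F x - c) * G x) ((hF.sub_const c).mul hG)
    (add_nonneg ((abs_nonneg _).trans (hh x₀)) ((abs_nonneg _).trans (hh x₀)))
    fun x y => (abs_sub _ _).trans (add_le_add (hh x) (hh y))
  rw [hhν, sub_zero] at htv
  rw [boltzmannGibbs_sub_eq (hFGint μ) (hGint μ) (hGpos μ).ne', abs_div, abs_of_pos (hGpos μ),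
    div_le_iff₀ (hGpos μ)]
  linarith

end

theorem stmt13 {E : Type*} [MeasurableSpace E] (μ ν : Measure E)
    [IsProbabilityMeasure μ] [IsProbabilityMeasure ν]
    (G : E → ℝ) (hG : Measurable G) (hGb : ∃ C, ∀ x, |G x| ≤ C)
    (hGpos : ∃ ε > 0, ∀ x, ε ≤ G x)
    (P : Kernel E E) [IsMarkovKernel P] :
    ∀ f : E → ℝ, Measurable f → (∀ x y, |f x - f y| ≤ 1) →
      |(∫ x, (∫ z, f z ∂(P x)) * G x ∂μ) / (∫ x, G x ∂μ)
        - (∫ x, (∫ z, f z ∂(P x)) * G x ∂ν) / (∫ x, G x ∂ν)|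
      ≤ 2 * (⨆ x, ⨆ y, G x / G y)
          * (sSup {r : ℝ | ∃ g : E → ℝ, Measurable g ∧ (∀ x y, |g x - g y| ≤ 1) ∧
                r = ⨆ x, ⨆ y, |(∫ z, g z ∂(P x)) - ∫ z, g z ∂(P y)|})
          * (sSup {r : ℝ | ∃ g : E → ℝ, Measurable g ∧ (∀ x y, |g x - g y| ≤ 1) ∧
                r = |(∫ x, g x ∂μ) - ∫ x, g x ∂ν|}) := by
  intro f hf hosc
  obtain ⟨C, hC⟩ := hGb
  obtain ⟨ε, hε, hεG⟩ := hGpos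
  have hG0 : ∀ x, 0 < G x := fun x => hε.trans_le (hεG x)
  have hratio : ∀ x y, G x / G y ≤ C / ε := fun x y =>
    div_le_div₀ ((abs_nonneg _).trans (hC x)) ((le_abs_self _).trans (hC x)) hε (hεG y)
  exact abs_boltzmannGibbs_sub_boltzmannGibbs_le μ ν
    hf.stronglyMeasurable.integral_kernel.measurable hG hG0
    (fun x y => (div_le_iff₀ (hG0 y)).1 (le_ciSup_ciSup hratio x y))
    (abs_integral_kernel_sub_le_dobrushinCoeff P hf hosc)
end
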